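/- Let 0 → ℤ → S → ℤ[1/p]/ℤ → 0 be a short exact sequence of abelian groups, and suppose there exists a group homomorphism τ : S → ℝ whose restriction to ℤ (via the first map) is the standard inclusion ℤ ↪ ℝ and which induces on the quotient the natural inclusion ℤ[1/p]/ℤ ↪ ℝ/ℤ. Then S is isomorphic to ℤ[1/p]; in particular S is torsion-free. -/
import Mathlib


/-- Let `0 → ℤ → S → ℤ[1/p]/ℤ → 0` be a short exact sequence of abelian groups and
suppose `τ : S → ℝ` restricts to the standard inclusion on `ℤ` and induces the natural
inclusion `ℤ[1/p]/ℤ ↪ ℝ/ℤ` on the quotient. Then `S ≅ ℤ[1/p]`; in particular `S` is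
torsion-free. -/
theorem stmt_6 (p : ℕ) (hp : p.Prime)
    (Zp : AddSubgroup ℚ)
    (hZp : Zp = AddSubgroup.closure {q : ℚ | ∃ (a : ℤ) (n : ℕ), q = (a : ℚ) / (p : ℚ) ^ n})
    (K : AddSubgroup Zp)
    (hK : K = AddSubgroup.closure {x : Zp | ∃ a : ℤ, (x : ℚ) = (a : ℚ)})
    (S : Type*) [AddCommGroup S]
    (i : ℤ →+ S) (g : S →+ Zp ⧸ K)
    (hi : Function.Injective i) (hg : Function.Surjective g)
    (hexact : ∀ s : S, g s = 0 ↔ s ∈ i.range)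
    (τ : S →+ ℝ)
    (hτℤ : ∀ m : ℤ, τ (i m) = (m : ℝ))
    (hτquot : ∀ (s : S) (q : Zp), g s = QuotientAddGroup.mk q →
      ∃ m : ℤ, τ s = ((q : ℚ) : ℝ) + (m : ℝ)) :
    Nonempty (S ≃+ Zp) ∧ ∀ (n : ℕ) (s : S), n • s = 0 → n = 0 ∨ s = 0 := by
  -- integers lie in Zp
  have hint : ∀ m : ℤ, (m : ℚ) ∈ Zp := by
    intro m
    rw [hZp]
    exact AddSubgroup.subset_closure ⟨m, 0, by simp⟩
  -- injectivity of the real coercion on Zp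
  have J : ∀ x y : Zp, ((x : ℚ) : ℝ) = ((y : ℚ) : ℝ) → x = y := by
    intro x y h
    exact Subtype.ext (by exact_mod_cast h)
  -- τ is injective
  have hτinj : ∀ s : S, τ s = 0 → s = 0 := by
    intro s hs
    obtain ⟨q, hq⟩ := QuotientAddGroup.mk_surjective (g s)
    obtain ⟨m, hm⟩ := hτquot s q hq.symm
    have hq' : (q : ℚ) = ((-m : ℤ) : ℚ) := by
      have : ((q : ℚ) : ℝ) = (((-m : ℤ) : ℚ) : ℝ) := by
        push_cast
        linarith [hs ▸ hm]
      exact_mod_cast this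
    have hqK : q ∈ K := by
      rw [hK]; exact AddSubgroup.subset_closure ⟨-m, hq'⟩
    have hg0 : g s = 0 := by
      rw [← hq]
      exact (QuotientAddGroup.eq_zero_iff q).mpr hqK
    obtain ⟨n, hn⟩ := (hexact s).mp hg0
    have : ((n : ℤ) : ℝ) = 0 := by rw [← hτℤ n, hn, hs]
    have hn0 : n = 0 := by exact_mod_cast this
    rw [← hn, hn0, map_zero]
  -- every τ value is in Zp
  have hex : ∀ s : S, ∃ x : Zp, ((x : ℚ) : ℝ) = τ s := by
    intro s
    obtain ⟨q, hq⟩ := QuotientAddGroup.mk_surjective (g s)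
    obtain ⟨m, hm⟩ := hτquot s q hq.symm
    refine ⟨⟨(q : ℚ) + (m : ℚ), Zp.add_mem q.2 (hint m)⟩, ?_⟩
    rw [hm]; push_cast; ring
  let f0 : S → Zp := fun s => (hex s).choose
  have hf0 : ∀ s : S, ((f0 s : ℚ) : ℝ) = τ s := fun s => (hex s).choose_spec
  let f : S →+ Zp := {
    toFun := f0
    map_zero' := by
      apply J
      rw [hf0, map_zero]; norm_num
    map_add' := by
      intro a b
      apply J
      rw [hf0, map_add, ← hf0 a, ← hf0 b]
      push_cast; ring }
  have hf : ∀ s : S, ((f s : ℚ) : ℝ) = τ s := hf0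
  have hinj : Function.Injective f := by
    intro a b hab
    have : τ (a - b) = 0 := by
      rw [map_sub, ← hf a, ← hf b, hab, sub_self]
    have := hτinj _ this
    exact sub_eq_zero.mp this
  have hsurj : Function.Surjective f := by
    intro x
    obtain ⟨s, hs⟩ := hg (QuotientAddGroup.mk x)
    obtain ⟨m, hm⟩ := hτquot s x hs
    refine ⟨s - i m, ?_⟩
    apply J
    rw [hf, map_sub, hτℤ, hm]
    ring
  refine ⟨⟨AddEquiv.ofBijective f ⟨hinj, hsurj⟩⟩, ?_⟩
  intro n s hns
  rcases Nat.eq_zero_or_pos n with h0 | hpos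
  · exact Or.inl h0
  · right
    have : (n : ℝ) * τ s = 0 := by
      have := congrArg τ hns
      rw [map_nsmul, map_zero] at this
      simpa [nsmul_eq_mul] using this
    have hτs : τ s = 0 := by
      rcases mul_eq_zero.mp this with h | h
      · exact absurd h (by positivity)
      · exact h
    exact hτinj s hτs
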